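/- The star K_{1,n} admits local uniform mixing from its center at time t (i.e., every entry of the column of U(t) = exp(itA) indexed by the center has absolute value 1/√(n+1)) if and only if tan(√n·t) = ±√n. -/

import Mathlib

/-!
Since `A³ = n A`, the adjacency matrix of the star has spectrum `{0, ±√n}`, and splitting `A`
along its spectral projections gives
`exp (i t A) = 1 + i sin(√n t)/√n • A + (cos(√n t) - 1)/n • A²`.
Its column at the center is `cos(√n t)` at the center and `i sin(√n t)/√n` at every leaf, so
mixing means `|cos θ| = |sin θ|/√n = 1/√(n+1)` for `θ = √n t`; by `sin² + cos² = 1` this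
is equivalent to `|tan θ| = √n`.
-/

/-- Adjacency matrix of the star `K_{1,n}`: vertex `0` is the center,
vertices `1,…,n` are the leaves. -/
noncomputable def starAdj (n : ℕ) : Matrix (Fin (n + 1)) (Fin (n + 1)) ℂ :=
  fun i j => if (i = 0 ∧ j ≠ 0) ∨ (i ≠ 0 ∧ j = 0) then 1 else 0

open NormedSpace
open scoped Nat

section NormedAlgebra

variable {𝔸 : Type*} [NormedRing 𝔸] [NormedAlgebra ℂ 𝔸] [CompleteSpace 𝔸]

theorem IsIdempotentElem.exp_smul {Q : 𝔸} (hQ : IsIdempotentElem Q) (c : ℂ) :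
    exp (c • Q) = 1 + (Complex.exp c - 1) • Q := by
  have hterm : ∀ k : ℕ, ((k ! : ℂ)⁻¹ • (c • Q) ^ k)
      = ((k ! : ℂ)⁻¹ • c ^ k) • Q + if k = 0 then 1 - Q else 0 := by
    rintro (_ | k)
    · simp
    · simp [smul_pow, hQ.pow_succ_eq, smul_smul]
  have hsum :
      HasSum (fun k : ℕ => (k ! : ℂ)⁻¹ • (c • Q) ^ k) (Complex.exp c • Q + (1 - Q)) := by
    simp_rw [hterm]
    refine HasSum.add ?_ (hasSum_ite_eq 0 (1 - Q))
    rw [Complex.exp_eq_exp_ℂ]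
    exact (exp_series_hasSum_exp' (𝕂 := ℂ) c).smul_const Q
  rw [(exp_series_hasSum_exp' (𝕂 := ℂ) (c • Q)).unique hsum]
  module

theorem exp_smul_add_smul_of_orthogonal {P Q : 𝔸} (hP : IsIdempotentElem P)
    (hQ : IsIdempotentElem Q) (hPQ : P * Q = 0) (hQP : Q * P = 0) (a b : ℂ) :
    exp (a • P + b • Q) = 1 + (Complex.exp a - 1) • P + (Complex.exp b - 1) • Q := by
  have hcomm : Commute (a • P) (b • Q) := by
    simp [Commute, SemiconjBy, hPQ, hQP]
  let : NormedAlgebra ℚ 𝔸 := NormedAlgebra.restrictScalars ℚ ℂ 𝔸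
  rw [exp_add_of_commute hcomm, hP.exp_smul, hQ.exp_smul]
  simp only [mul_add, add_mul, one_mul, mul_one, smul_mul_smul_comm, hPQ, smul_zero, add_zero,
    add_assoc]

theorem exp_smul_of_pow_three_eq {A : 𝔸} {c : ℂ} (hc : c ≠ 0) (hA : A ^ 3 = c ^ 2 • A)
    (z : ℂ) :
    exp (z • A) =
      1 + (Complex.sinh (c * z) / c) • A + ((Complex.cosh (c * z) - 1) / c ^ 2) • A ^ 2 := by
  have h22 : A ^ 2 * A ^ 2 = c ^ 2 • A ^ 2 := by
    rw [← pow_add, pow_succ, show 2 + 1 = 3 from rfl, hA, smul_mul_assoc, ← sq]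
  have h21 : A ^ 2 * A = c ^ 2 • A := by rw [← pow_succ, hA]
  have h12 : A * A ^ 2 = c ^ 2 • A := by rw [← pow_succ', hA]
  have hmul : ∀ a b a' b' : ℂ, (a • A ^ 2 + b • A) * (a' • A ^ 2 + b' • A)
      = (c ^ 2 * a * a' + b * b') • A ^ 2 + (c ^ 2 * (a * b' + b * a')) • A := by
    intro a b a' b'
    simp only [mul_add, add_mul, smul_mul_smul_comm, h22, h21, h12, ← sq, smul_smul]
    module
  -- the spectral projections of `A` for its eigenvalues `c` and `-c`
  have hP : IsIdempotentElem ((2 * c ^ 2)⁻¹ • A ^ 2 + (2 * c)⁻¹ • A) := by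
    rw [IsIdempotentElem, hmul]; match_scalars <;> field_simp <;> ring
  have hQ : IsIdempotentElem ((2 * c ^ 2)⁻¹ • A ^ 2 + (-(2 * c)⁻¹) • A) := by
    rw [IsIdempotentElem, hmul]; match_scalars <;> field_simp <;> ring
  have hPQ : ((2 * c ^ 2)⁻¹ • A ^ 2 + (2 * c)⁻¹ • A) *
      ((2 * c ^ 2)⁻¹ • A ^ 2 + (-(2 * c)⁻¹) • A) = 0 := by
    rw [hmul]; match_scalars <;> field_simp <;> ring
  have hQP : ((2 * c ^ 2)⁻¹ • A ^ 2 + (-(2 * c)⁻¹) • A) *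
      ((2 * c ^ 2)⁻¹ • A ^ 2 + (2 * c)⁻¹ • A) = 0 := by
    rw [hmul]; match_scalars <;> field_simp <;> ring
  have hzA : z • A = (c * z) • ((2 * c ^ 2)⁻¹ • A ^ 2 + (2 * c)⁻¹ • A)
      + (-(c * z)) • ((2 * c ^ 2)⁻¹ • A ^ 2 + (-(2 * c)⁻¹) • A) := by
    match_scalars <;> field_simp <;> ring
  rw [hzA, exp_smul_add_smul_of_orthogonal hP hQ hPQ hQP, Complex.sinh, Complex.cosh]
  match_scalars <;> field_simp <;> ring

end NormedAlgebra

theorem Matrix.exp_smul_of_pow_three_eq {m : Type*} [Fintype m] [DecidableEq m]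
    {A : Matrix m m ℂ} {c : ℂ} (hc : c ≠ 0) (hA : A ^ 3 = c ^ 2 • A) (z : ℂ) :
    exp (z • A) =
      1 + (Complex.sinh (c * z) / c) • A + ((Complex.cosh (c * z) - 1) / c ^ 2) • A ^ 2 := by
  let : NormedRing (Matrix m m ℂ) := Matrix.linftyOpNormedRing
  let : NormedAlgebra ℂ (Matrix m m ℂ) := Matrix.linftyOpNormedAlgebra
  exact _root_.exp_smul_of_pow_three_eq hc hA z

theorem Real.abs_cos_eq_and_abs_sin_div_eq_iff {s θ : ℝ} (hs : 0 < s) :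
    (|cos θ| = 1 / √(s ^ 2 + 1) ∧ |sin θ| / s = 1 / √(s ^ 2 + 1)) ↔
      (tan θ = s ∨ tan θ = -s) := by
  rw [← abs_eq hs.le, tan_eq_sin_div_cos, abs_div]
  have hr : 0 < √(s ^ 2 + 1) := by positivity
  constructor
  · rintro ⟨hcos, hsin⟩
    have hpos : 0 < |cos θ| := by rw [hcos]; positivity
    rw [div_eq_iff hpos.ne', hcos, ← hsin]
    field_simp
  · intro htan
    have hcos : cos θ ≠ 0 := by
      rintro h
      simp [h] at htan
      linarith
    have hsin : |sin θ| = s * |cos θ| := by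
      rw [← htan]; field_simp
    have hcos_sq : (s ^ 2 + 1) * cos θ ^ 2 = 1 := by
      have := sin_sq_add_cos_sq θ
      rw [← sq_abs (sin θ), hsin, mul_pow, sq_abs] at this
      linarith
    have habs : |cos θ| = 1 / √(s ^ 2 + 1) := by
      rw [← sqrt_sq_eq_abs, eq_div_iff hr.ne', ← sqrt_mul (sq_nonneg _), mul_comm, hcos_sq,
        sqrt_one]
    refine ⟨habs, ?_⟩
    rw [hsin, ← habs]
    field_simp

section starAdj

variable {n : ℕ}

theorem starAdj_apply_zero_right (i : Fin (n + 1)) : starAdj n i 0 = if i = 0 then 0 else 1 := by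
  by_cases hi : i = 0 <;> simp [starAdj, hi]

theorem starAdj_sq_apply (i j : Fin (n + 1)) :
    (starAdj n ^ 2) i j =
      if i = 0 then (if j = 0 then (n : ℂ) else 0) else (if j = 0 then 0 else 1) := by
  rw [sq, Matrix.mul_apply, Fin.sum_univ_succ]
  by_cases hi : i = 0 <;> by_cases hj : j = 0 <;> simp [starAdj, hi, hj, Fin.succ_ne_zero]

theorem starAdj_pow_three : starAdj n ^ 3 = (n : ℂ) • starAdj n := by
  ext i j
  rw [pow_succ, Matrix.mul_apply, Fin.sum_univ_succ]
  by_cases hi : i = 0 <;> by_cases hj : j = 0 <;>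
    simp [starAdj_sq_apply, starAdj, hi, hj, Fin.succ_ne_zero]

theorem exp_starAdj_apply_zero_right (hn : n ≠ 0) (t : ℝ) (i : Fin (n + 1)) :
    exp ((Complex.I * t) • starAdj n) i 0 =
      if i = 0 then (Real.cos (√n * t) : ℂ)
      else Complex.I * (Real.sin (√n * t) / √n : ℝ) := by
  have hc : ((√n : ℝ) : ℂ) ≠ 0 := by simpa using hn
  have hc2 : ((√n : ℝ) : ℂ) ^ 2 = n := by norm_cast; simp
  rw [Matrix.exp_smul_of_pow_three_eq hc (hc2 ▸ starAdj_pow_three)]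
  have hct : ((√n : ℝ) : ℂ) * (Complex.I * t) = ((√n * t : ℝ) : ℂ) * Complex.I := by
    push_cast; ring
  rw [hct, Complex.sinh_mul_I, Complex.cosh_mul_I]
  by_cases hi : i = 0
  · have hn' : (n : ℂ) ≠ 0 := Nat.cast_ne_zero.mpr hn
    simp [hi, starAdj_apply_zero_right, starAdj_sq_apply, hc2, hn']
  · simp [hi, starAdj_apply_zero_right, starAdj_sq_apply]
    ring

end starAdj

theorem star_local_uniform_mixing_iff (n : ℕ) (hn : 1 ≤ n) (t : ℝ) :
    (∀ i : Fin (n + 1),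
        ‖NormedSpace.exp ((Complex.I * (t : ℂ)) • starAdj n) i 0‖
          = 1 / Real.sqrt (n + 1))
      ↔ (Real.tan (Real.sqrt n * t) = Real.sqrt n
          ∨ Real.tan (Real.sqrt n * t) = -Real.sqrt n) := by
  have hn0 : n ≠ 0 := by omega
  have : Nonempty (Fin n) := ⟨⟨0, hn⟩⟩
  have hs : 0 < √(n : ℝ) := by positivity
  rw [← Real.abs_cos_eq_and_abs_sin_div_eq_iff hs, Real.sq_sqrt n.cast_nonneg,
    Fin.forall_fin_succ]
  simp only [exp_starAdj_apply_zero_right hn0, Fin.succ_ne_zero, if_true, if_false, forall_const,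
    Complex.norm_real, norm_mul, Complex.norm_I, one_mul, Real.norm_eq_abs, abs_div, abs_of_pos hs]
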